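/- Let \(A\) be a symmetric \(3\times 3\) complex matrix and let \(\xi=(r,0,0)\) with \(r>0\). Then the expression \(-2|A\xi|^2|\xi|^2+\tfrac12|\xi^T A\xi|^2+\tfrac12\,\xi^T A\xi\cdot\overline{\operatorname{tr}A}\,|\xi|^2+\tfrac12\,\xi^T\bar A\xi\cdot\operatorname{tr}A\,|\xi|^2-\tfrac12|\operatorname{tr}A|^2|\xi|^4+|A|^2|\xi|^4\) equals \(\left(\tfrac12|a_{22}-a_{33}|^2+2|a_{23}|^2\right)r^4\). -/

import Mathlib

open Finset

/-- The quadratic expression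
`-2|Aξ|²|ξ|² + ½|ξᵀAξ|² + ½ ξᵀAξ · conj(tr A) |ξ|² + ½ ξᵀĀξ · tr A |ξ|²
 - ½|tr A|²|ξ|⁴ + |A|²|ξ|⁴`. -/
noncomputable def secondVariationIntegrand (A : Matrix (Fin 3) (Fin 3) ℂ) (ξ : Fin 3 → ℝ) : ℂ :=
  let ξC : Fin 3 → ℂ := fun i => (ξ i : ℂ)
  let n2 : ℂ := ((∑ i, ξ i ^ 2 : ℝ) : ℂ)
  let Aξ2 : ℂ := ((∑ i, Complex.normSq (∑ j, A i j * ξC j) : ℝ) : ℂ)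
  let q : ℂ := ∑ i, ∑ j, A i j * ξC i * ξC j
  let qbar : ℂ := ∑ i, ∑ j, (starRingEnd ℂ) (A i j) * ξC i * ξC j
  let trA : ℂ := ∑ i, A i i
  let nA2 : ℂ := ((∑ i, ∑ j, Complex.normSq (A i j) : ℝ) : ℂ)
  (-2) * Aξ2 * n2 + (1 / 2) * ((Complex.normSq q : ℝ) : ℂ)
    + (1 / 2) * q * (starRingEnd ℂ) trA * n2 + (1 / 2) * qbar * trA * n2
    - (1 / 2) * ((Complex.normSq trA : ℝ) : ℂ) * n2 ^ 2 + nA2 * n2 ^ 2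


theorem secondVariationIntegrand_eq (A : Matrix (Fin 3) (Fin 3) ℂ)
    (hA : A.IsSymm) (r : ℝ) :
    secondVariationIntegrand A (fun i => if i = 0 then r else 0) =
      (((1 / 2) * Complex.normSq (A 1 1 - A 2 2) + 2 * Complex.normSq (A 1 2) : ℝ) : ℂ)
        * (r : ℂ) ^ 4 := by
  -- With `ξ = r e₀`, `|Aξ|²` is `r²` times the squared norm of the first column of `A`; symmetry
  -- identifies it with the first row, so it cancels against that row's share of `|A|²`.
  simp only [secondVariationIntegrand, Fin.sum_univ_three,
    hA.apply 0 1, hA.apply 0 2, hA.apply 1 2]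
  push_cast [Complex.normSq_eq_conj_mul_self]
  simp only [map_add, map_mul, map_sub, Complex.conj_ofReal, map_zero]
  ring
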